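/- Let φ be a monotone E3CNF formula and Δ ⊆ I_φ a set of tuples such that I_φ ∖ Δ is consistent with respect to Σ_{AB→C→B} = {AB → C, C → B}. Then for every clause c_i of φ, Δ contains at least two of the three tuples of I_φ whose value on attribute A is c_i. -/

import Mathlib

/-- A functional dependency `X → Y` is a pair of attribute sets; two tuples form a
`φ`-conflict if they agree on every attribute of `X` but differ on some attribute of `Y`. -/
def IsPhiConflict {α V : Type*} (X Y : Finset α) (s t : α → V) : Prop :=
  (∀ a ∈ X, s a = t a) ∧ (∃ a ∈ Y, s a ≠ t a)

instance {α V : Type*} [DecidableEq V] (X Y : Finset α) (s t : α → V) :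
    Decidable (IsPhiConflict X Y s t) := by
  unfold IsPhiConflict; infer_instance

/-- Two tuples form a conflict w.r.t. a finite FD set if they form a `φ`-conflict
for some FD `φ` of the set. -/
def IsConflict {α V : Type*} (FDs : Finset (Finset α × Finset α)) (s t : α → V) : Prop :=
  ∃ fd ∈ FDs, IsPhiConflict fd.1 fd.2 s t

instance {α V : Type*} [DecidableEq V] (FDs : Finset (Finset α × Finset α)) (s t : α → V) :
    Decidable (IsConflict FDs s t) := by
  unfold IsConflict; infer_instance

/-- A set of tuples is consistent w.r.t. an FD set if no two of its tuples form a conflict. -/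
def Consistent {α V : Type*} (FDs : Finset (Finset α × Finset α)) (J : Finset (α → V)) : Prop :=
  ∀ s ∈ J, ∀ t ∈ J, ¬ IsConflict FDs s t

/-- `opt FDs I` is the minimum of `dist(J,I) = |I| - |J|` over all consistent subsets `J ⊆ I`. -/
noncomputable def opt {α V : Type*} (FDs : Finset (Finset α × Finset α))
    (I : Finset (α → V)) : ℕ :=
  sInf {d : ℕ | ∃ J ⊆ I, Consistent FDs J ∧ d = I.card - J.card}

/-- A monotone E3CNF formula with `n` variables and `m` clauses: each clause has exactly
three literals over pairwise distinct variables and is monotone, i.e. all its literals have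
the same polarity `pol i` (`true` = all positive, `false` = all negative). -/
structure MonotoneE3CNF (n m : ℕ) where
  lit : Fin m → Fin 3 → Fin n
  pol : Fin m → Bool
  distinct : ∀ i, Function.Injective (lit i)

/-- The number of clauses satisfied by assignment `τ`. -/
def MonotoneE3CNF.numSat {n m : ℕ} (φ : MonotoneE3CNF n m) (τ : Fin n → Bool) : ℕ :=
  (Finset.univ.filter fun i : Fin m => ∃ k, τ (φ.lit i k) = φ.pol i).card

/-- `#τ_max(φ)`: the maximum number of simultaneously satisfiable clauses. -/
def MonotoneE3CNF.maxSat {n m : ℕ} (φ : MonotoneE3CNF n m) : ℕ :=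
  Finset.univ.sup fun τ : Fin n → Bool => φ.numSat τ

/-- Values used in the instance `I_φ`: clause constants `c_i`, variable constants `x_j`,
and the two Boolean values; all pairwise distinct. -/
abbrev Val2 (n m : ℕ) := Sum (Fin m) (Sum (Fin n) Bool)

/-- The two tuples `(x_j, 1, x_j)` and `(x_j, 0, x_j)` built for variable `x_j`. -/
def varTuple {n m : ℕ} (j : Fin n) (b : Bool) : Fin 3 → Val2 n m :=
  ![Sum.inr (Sum.inl j), Sum.inr (Sum.inr b), Sum.inr (Sum.inl j)]

/-- The tuple built for the `k`-th literal of clause `i`: `(c_i, 1, x_j)` if the variable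
`j = lit i k` occurs positively in clause `i`, `(c_i, 0, x_j)` if it occurs negatively. -/
def clauseTuple {n m : ℕ} (φ : MonotoneE3CNF n m) (i : Fin m) (k : Fin 3) : Fin 3 → Val2 n m :=
  ![Sum.inl i, Sum.inr (Sum.inr (φ.pol i)), Sum.inr (Sum.inl (φ.lit i k))]

/-- The instance `I_φ` over attributes `A = 0`, `B = 1`, `C = 2`. -/
def Iphi2 {n m : ℕ} (φ : MonotoneE3CNF n m) : Finset (Fin 3 → Val2 n m) :=
  (Finset.univ.image fun p : Fin n × Bool => varTuple p.1 p.2) ∪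
    (Finset.univ.image fun p : Fin m × Fin 3 => clauseTuple φ p.1 p.2)

/-- The FD set `Σ_{AB→C→B} = {AB → C, C → B}`. -/
def Sigma2 : Finset (Finset (Fin 3) × Finset (Fin 3)) := {({0, 1}, {2}), ({2}, {1})}

theorem Consistent.card_inter_le_one {α V : Type*} [DecidableEq (α → V)]
    {FDs : Finset (Finset α × Finset α)} {J S : Finset (α → V)} (hJ : Consistent FDs J)
    (hS : ∀ s ∈ S, ∀ t ∈ S, s ≠ t → IsConflict FDs s t) : (S ∩ J).card ≤ 1 := by
  refine Finset.card_le_one.2 fun s hs t ht => ?_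
  rw [Finset.mem_inter] at hs ht
  by_contra hst
  exact hJ s hs.2 t ht.2 (hS s hs.1 t ht.1 hst)

theorem clauseTuple_injective {n m : ℕ} (φ : MonotoneE3CNF n m) (i : Fin m) :
    Function.Injective (clauseTuple φ i) := fun k k' h => by
  have hC := congrFun h 2
  simp only [clauseTuple, Matrix.cons_val_two, Matrix.tail_cons, Matrix.head_cons,
    Sum.inr.injEq, Sum.inl.injEq] at hC
  exact φ.distinct i hC

theorem clauseTuple_mem_Iphi2 {n m : ℕ} (φ : MonotoneE3CNF n m) (i : Fin m) (k : Fin 3) :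
    clauseTuple φ i k ∈ Iphi2 φ :=
  Finset.mem_union_right _ (Finset.mem_image.2 ⟨(i, k), Finset.mem_univ _, rfl⟩)

-- Tuples of one clause share `A = c_i` and, by monotonicity, `B`; they differ on `C`.
theorem isConflict_clauseTuple {n m : ℕ} (φ : MonotoneE3CNF n m) (i : Fin m) {k k' : Fin 3}
    (hk : k ≠ k') : IsConflict Sigma2 (clauseTuple φ i k) (clauseTuple φ i k') := by
  refine ⟨({0, 1}, {2}), by simp [Sigma2], ?_, 2, Finset.mem_singleton_self 2, ?_⟩
  · intro a ha
    fin_cases ha <;> rfl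
  · exact fun h => hk (clauseTuple_injective φ i (funext fun a => by
      fin_cases a
      exacts [rfl, rfl, h]))

theorem stmt3_general {n m : ℕ} (φ : MonotoneE3CNF n m)
    (Δ : Finset (Fin 3 → Val2 n m))
    (hcons : Consistent Sigma2 (Iphi2 φ \ Δ)) :
    ∀ i : Fin m, 2 ≤ (Δ.filter fun t => t 0 = Sum.inl i).card := by
  intro i
  set S := Finset.univ.image (clauseTuple φ i)
  have hS_card : S.card = 3 := by
    rw [Finset.card_image_of_injective _ (clauseTuple_injective φ i), Finset.card_fin]
  have hS_conflict : ∀ s ∈ S, ∀ t ∈ S, s ≠ t → IsConflict Sigma2 s t := by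
    simp only [S, Finset.mem_image, Finset.mem_univ, true_and]
    rintro _ ⟨k, rfl⟩ _ ⟨k', rfl⟩ hst
    exact isConflict_clauseTuple φ i fun hk => hst (hk ▸ rfl)
  have hS_kept : (S \ Δ).card ≤ 1 := by
    have hS_sub : S ⊆ Iphi2 φ := by
      simpa [S, Finset.image_subset_iff] using clauseTuple_mem_Iphi2 φ i
    rw [← Finset.inter_eq_left.2 hS_sub, Finset.inter_sdiff_assoc]
    exact hcons.card_inter_le_one hS_conflict
  have hS_removed : S ∩ Δ ⊆ Δ.filter fun t => t 0 = Sum.inl i := by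
    intro t ht
    obtain ⟨k, -, rfl⟩ := Finset.mem_image.1 (Finset.mem_inter.1 ht).1
    exact Finset.mem_filter.2 ⟨(Finset.mem_inter.1 ht).2, rfl⟩
  have hS_split := Finset.card_inter_add_card_sdiff S Δ
  have hS_removed_card := Finset.card_le_card hS_removed
  omega

/-- If `Δ ⊆ I_φ` and `I_φ ∖ Δ` is consistent w.r.t. `Σ_{AB→C→B} = {AB → C, C → B}`,
then for every clause `c_i`, `Δ` contains at least two of the three tuples of `I_φ`
whose value on attribute `A` is `c_i`. -/
theorem stmt3 {n m : ℕ} (φ : MonotoneE3CNF n m)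
    (Δ : Finset (Fin 3 → Val2 n m)) (hΔ : Δ ⊆ Iphi2 φ)
    (hcons : Consistent Sigma2 (Iphi2 φ \ Δ)) :
    ∀ i : Fin m, 2 ≤ (Δ.filter fun t => t 0 = Sum.inl i).card :=
  stmt3_general φ Δ hcons
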